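/- Let m be a positive odd integer and let α, β be real numbers with 0 < α ≤ β. Then for every t ∈ [0,1], ψ^(m)(α)/ψ^(m)(β) ≥ ψ^(m)(α+t)/ψ^(m)(β+t) ≥ ψ^(m)(α+1)/ψ^(m)(β+1). -/

import Mathlib

/-!
Since `ψ (x + 1) = ψ x + 1 / x` and `ψ` is increasing (`log ∘ Γ` is convex), comparing `ψ` at
`x + N` and `1 + N` gives `ψ x - ψ 1 = ∑ (1 / (n + 1) - 1 / (n + x))`. Differentiating termwise,
`ψ^(m) = m! ζ(m + 1, ·)` for odd `m`, where `ζ(s, x) = ∑ (n + x)^(-s)` is the Hurwitz zeta function.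
As `∂ₓ ζ(s, x) = -s ζ(s + 1, x)`, the ratio `t ↦ ζ(s, α + t) / ζ(s, β + t)` is antitone once
`ζ(s, x) ζ(s + 1, y) ≤ ζ(s + 1, x) ζ(s, y)` for `x ≤ y`. Expanding both sides as double series,
this holds already for the sum of the `(n, k)` and `(k, n)` terms.
-/

/-- The digamma (psi) function: logarithmic derivative of the Gamma function. -/
noncomputable def psi (t : ℝ) : ℝ := deriv Real.Gamma t / Real.Gamma t

open Real Filter Topology Set

/-- The Hurwitz zeta function `ζ(s, x)` for natural `s`; it is the junk value `0` for `s ≤ 1`. -/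
noncomputable def hurwitzZetaReal (s : ℕ) (x : ℝ) : ℝ := ∑' n : ℕ, ((n + x) ^ s)⁻¹

lemma summable_inv_add_pow {s : ℕ} (hs : 1 < s) {x : ℝ} (hx : 0 < x) :
    Summable fun n : ℕ => ((n + x) ^ s)⁻¹ :=
  ((summable_one_div_nat_add_rpow x s).2 (by exact_mod_cast hs)).congr fun n => by
    rw [abs_of_pos (by positivity), rpow_natCast, one_div]

lemma hurwitzZetaReal_pos {s : ℕ} (hs : 1 < s) {x : ℝ} (hx : 0 < x) :
    0 < hurwitzZetaReal s x :=
  (summable_inv_add_pow hs hx).tsum_pos (fun n => by positivity) 0 (by positivity)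

lemma hasDerivAt_inv_add_pow (s : ℕ) (a : ℝ) {y : ℝ} (hy : a + y ≠ 0) :
    HasDerivAt (fun z => ((a + z) ^ s)⁻¹) (-s * ((a + y) ^ (s + 1))⁻¹) y := by
  refine ((((hasDerivAt_id y).const_add a).pow s).fun_inv (pow_ne_zero s hy)).congr_deriv ?_
  simp only [Pi.pow_apply, id]
  rcases s with _ | k
  · simp
  · rw [Nat.add_sub_cancel]
    field_simp
    ring

lemma hasDerivAt_tsum_of_hasDerivAt_inv_add_pow {g : ℕ → ℝ → ℝ} {s : ℕ} (hs : 1 < s) (c : ℝ)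
    (hg : ∀ (n : ℕ) (y : ℝ), 0 < y → HasDerivAt (g n) (c * ((n + y) ^ s)⁻¹) y) {x : ℝ} (hx : 0 < x)
    (hsum : Summable fun n => g n x) :
    HasDerivAt (fun y => ∑' n, g n y) (c * hurwitzZetaReal s x) x := by
  have hx2 : 0 < x / 2 := half_pos hx
  have key := hasDerivAt_tsum_of_isPreconnected ((summable_inv_add_pow hs hx2).mul_left |c|)
    isOpen_Ioi isPreconnected_Ioi (fun n y hy => hg n y (hx2.trans hy))
    (fun n y (hy : x / 2 < y) => ?_) (half_lt_self hx) hsum (half_lt_self hx)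
  · rwa [tsum_mul_left] at key
  · have hy0 : 0 < y := hx2.trans hy
    rw [norm_mul, norm_inv, norm_pow, Real.norm_eq_abs, Real.norm_of_nonneg (by positivity)]
    gcongr

lemma hasDerivAt_hurwitzZetaReal {s : ℕ} (hs : 1 < s) {x : ℝ} (hx : 0 < x) :
    HasDerivAt (hurwitzZetaReal s) (-s * hurwitzZetaReal (s + 1) x) x :=
  hasDerivAt_tsum_of_hasDerivAt_inv_add_pow (by omega) (-s)
    (fun n _ hy => hasDerivAt_inv_add_pow s n (by positivity)) hx (summable_inv_add_pow hs hx)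

lemma summable_inv_add_one_sub_inv_add {x : ℝ} (hx : 0 < x) :
    Summable fun n : ℕ => ((n : ℝ) + 1)⁻¹ - (n + x)⁻¹ := by
  set c := min 1 x
  have hc : 0 < c := lt_min one_pos hx
  refine .of_norm_bounded ((summable_inv_add_pow one_lt_two hc).mul_left |x - 1|) fun n => ?_
  have h1 : (n : ℝ) + c ≤ n + 1 := by gcongr; exact min_le_left _ _
  have hx : (n : ℝ) + c ≤ n + x := by gcongr; exact min_le_right _ _
  rw [inv_sub_inv (by positivity) (by positivity), add_sub_add_left_eq_sub, Real.norm_eq_abs,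
    abs_div, abs_of_pos (by positivity : (0 : ℝ) < (n + 1) * (n + x)), div_eq_mul_inv, sq]
  gcongr

lemma add_natCast_eq_add_sum_inv {f : ℝ → ℝ} (hf : ∀ x, 0 < x → f (x + 1) = f x + x⁻¹)
    {y : ℝ} (hy : 0 < y) (N : ℕ) : f (y + N) = f y + ∑ k ∈ Finset.range N, ((k : ℝ) + y)⁻¹ := by
  induction N with
  | zero => simp
  | succ N ih =>
    rw [Nat.cast_succ, ← add_assoc, hf _ (by positivity), ih, Finset.sum_range_succ, add_comm y]
    ring

lemma hasSum_inv_add_one_sub_inv_add_of_add_one {f : ℝ → ℝ}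
    (hf : ∀ x, 0 < x → f (x + 1) = f x + x⁻¹) (hmono : MonotoneOn f (Ioi 0)) {x : ℝ}
    (hx : 0 < x) : HasSum (fun n : ℕ => ((n : ℝ) + 1)⁻¹ - (n + x)⁻¹) (f x - f 1) := by
  have hpartial : ∀ N : ℕ, ∑ k ∈ Finset.range N, (((k : ℝ) + 1)⁻¹ - (k + x)⁻¹) =
      f x - f 1 + (f (1 + N) - f (x + N)) := fun N => by
    rw [Finset.sum_sub_distrib, add_natCast_eq_add_sum_inv hf one_pos,
      add_natCast_eq_add_sum_inv hf hx]
    ring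
  -- both `1 + N` and `x + N` lie in `[N, N + c]`, where `f` increases by at most `c / N`
  set c : ℕ := ⌈x⌉₊ + 1
  have hxc : x ≤ c := by simp only [c, Nat.cast_add, Nat.cast_one]; linarith [Nat.le_ceil x]
  have hbound : ∀ N : ℕ, 1 ≤ N → ‖f (1 + N) - f (x + N)‖ ≤ c / N := by
    intro N hN1
    have hN : (0 : ℝ) < N := by exact_mod_cast hN1
    have hgrowth : f (N + c) - f N ≤ c / N := by
      rw [add_natCast_eq_add_sum_inv hf hN, add_sub_cancel_left]
      calc ∑ k ∈ Finset.range c, ((k : ℝ) + N)⁻¹ ≤ ∑ _k ∈ Finset.range c, (N : ℝ)⁻¹ :=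
            Finset.sum_le_sum fun k _ => inv_anti₀ hN (by simp)
        _ = c / N := by simp [div_eq_mul_inv]
    have hmem : ∀ y : ℝ, 0 ≤ y → y ≤ c → f N ≤ f (y + N) ∧ f (y + N) ≤ f (N + c) := fun y hy hyc =>
      ⟨hmono hN (by positivity : (0 : ℝ) < y + N) (by linarith),
        hmono (by positivity : (0 : ℝ) < y + N) (by positivity : (0 : ℝ) < N + c) (by linarith)⟩
    have h1mem := hmem 1 zero_le_one (by simp [c])
    have hxmem := hmem x hx.le hxc
    rw [Real.norm_eq_abs, abs_sub_le_iff]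
    constructor <;> linarith
  have herr : Tendsto (fun N : ℕ => f (1 + N) - f (x + N)) atTop (𝓝 0) :=
    squeeze_zero_norm' (eventually_atTop.2 ⟨1, hbound⟩)
      (tendsto_const_div_atTop_nhds_zero_nat (c : ℝ))
  rw [(summable_inv_add_one_sub_inv_add hx).hasSum_iff_tendsto_nat]
  simpa [hpartial] using (tendsto_const_nhds (x := f x - f 1)).add herr

lemma differentiableAt_Gamma_of_pos {x : ℝ} (hx : 0 < x) : DifferentiableAt ℝ Gamma x :=
  differentiableAt_Gamma fun m => ((neg_nonpos.2 m.cast_nonneg).trans_lt hx).ne'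

lemma psi_eq_deriv_log_Gamma {x : ℝ} (hx : 0 < x) : psi x = deriv (log ∘ Gamma) x := by
  rw [Function.comp_def, deriv.log (differentiableAt_Gamma_of_pos hx) (Gamma_pos_of_pos hx).ne',
    psi]

lemma psi_add_one {x : ℝ} (hx : 0 < x) : psi (x + 1) = psi x + x⁻¹ := by
  have hlog : (fun y => (log ∘ Gamma) (y + 1)) =ᶠ[𝓝 x] fun y => log (Gamma y) + log y := by
    filter_upwards [eventually_gt_nhds hx] with y hy
    simp [Gamma_add_one hy.ne', log_mul hy.ne' (Gamma_pos_of_pos hy).ne', add_comm]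
  have hdiff := (differentiableAt_Gamma_of_pos hx).log (Gamma_pos_of_pos hx).ne'
  rw [psi_eq_deriv_log_Gamma (by positivity), psi_eq_deriv_log_Gamma hx, ← deriv_comp_add_const,
    hlog.deriv_eq, deriv_fun_add hdiff (differentiableAt_log hx.ne'), deriv_log,
    Function.comp_def]

lemma monotoneOn_psi : MonotoneOn psi (Ioi 0) := by
  intro x hx y hy hxy
  rw [psi_eq_deriv_log_Gamma hx, psi_eq_deriv_log_Gamma hy]
  exact convexOn_log_Gamma.monotoneOn_deriv (fun z hz =>
    (differentiableAt_Gamma_of_pos hz).log (Gamma_pos_of_pos hz).ne') hx hy hxy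

lemma hasDerivAt_psi {x : ℝ} (hx : 0 < x) : HasDerivAt psi (hurwitzZetaReal 2 x) x := by
  have hterm : ∀ (n : ℕ) (y : ℝ), 0 < y → HasDerivAt (fun z : ℝ => ((n : ℝ) + 1)⁻¹ - (n + z)⁻¹)
      (1 * ((n + y) ^ 2)⁻¹) y := fun n y hy => by
    simpa using (hasDerivAt_inv_add_pow 1 (n : ℝ) (by positivity)).const_sub (((n : ℝ) + 1)⁻¹)
  have hseries := (hasDerivAt_tsum_of_hasDerivAt_inv_add_pow one_lt_two 1 hterm hx
    (summable_inv_add_one_sub_inv_add hx)).const_add (psi 1)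
  rw [one_mul] at hseries
  refine hseries.congr_of_eventuallyEq ?_
  filter_upwards [eventually_gt_nhds hx] with y hy
  rw [(hasSum_inv_add_one_sub_inv_add_of_add_one (fun _ => psi_add_one) monotoneOn_psi hy).tsum_eq]
  ring

lemma iteratedDeriv_psi {m : ℕ} (hm : 0 < m) {x : ℝ} (hx : 0 < x) :
    iteratedDeriv m psi x = (-1) ^ (m + 1) * m.factorial * hurwitzZetaReal (m + 1) x := by
  induction m, hm using Nat.le_induction generalizing x with
  | base => simp [(hasDerivAt_psi hx).deriv]
  | succ m hm ih =>
    have heq : iteratedDeriv m psi =ᶠ[𝓝 x]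
        fun y => (-1) ^ (m + 1) * m.factorial * hurwitzZetaReal (m + 1) y := by
      filter_upwards [eventually_gt_nhds hx] with y hy using ih hy
    rw [iteratedDeriv_succ, heq.deriv_eq,
      ((hasDerivAt_hurwitzZetaReal (by omega) hx).const_mul _).deriv, Nat.factorial_succ]
    push_cast
    ring

lemma tsum_le_tsum_of_add_swap_le {ι : Type*} {F G : ι × ι → ℝ} (hF : Summable F)
    (hG : Summable G) (h : ∀ p : ι × ι, G p + G p.swap ≤ F p + F p.swap) :
    ∑' p, G p ≤ ∑' p, F p := by
  have hswap : ∀ H : ι × ι → ℝ, Summable H →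
      Summable (fun p => H p + H p.swap) ∧ ∑' p, (H p + H p.swap) = 2 * ∑' p, H p := by
    intro H hH
    have hH' : Summable (fun p : ι × ι => H p.swap) := (Equiv.prodComm ι ι).summable_iff.2 hH
    refine ⟨hH.add hH', ?_⟩
    rw [hH.tsum_add hH',
      show ∑' p : ι × ι, H p.swap = ∑' p, H p from (Equiv.prodComm ι ι).tsum_eq H]
    ring
  have := Summable.tsum_le_tsum h (hswap G hG).1 (hswap F hF).1
  linarith [(hswap F hF).2, (hswap G hG).2]

lemma pow_mul_pow_succ_add_le (s : ℕ) {p₁ p₂ q₁ q₂ : ℝ} (h0 : 0 ≤ p₂ * q₁)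
    (hcross : p₂ * q₁ ≤ p₁ * q₂) (h₁ : q₁ ≤ p₁) (h₂ : q₂ ≤ p₂) (hq : q₂ ≤ q₁) :
    p₁ ^ s * q₂ ^ (s + 1) + p₂ ^ s * q₁ ^ (s + 1) ≤
      p₁ ^ (s + 1) * q₂ ^ s + p₂ ^ (s + 1) * q₁ ^ s := by
  have hBA : (p₂ * q₁) ^ s ≤ (p₁ * q₂) ^ s := pow_le_pow_left₀ h0 hcross s
  have hB : 0 ≤ (p₂ * q₁) ^ s := pow_nonneg h0 s
  -- only `p₂ - q₁` may be negative; its weight `(p₂ q₁)^s` is the smaller one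
  have hdiff : p₁ ^ (s + 1) * q₂ ^ s + p₂ ^ (s + 1) * q₁ ^ s -
      (p₁ ^ s * q₂ ^ (s + 1) + p₂ ^ s * q₁ ^ (s + 1)) =
      (p₁ * q₂) ^ s * (p₁ - q₂) + (p₂ * q₁) ^ s * (p₂ - q₁) := by ring
  nlinarith [mul_le_mul_of_nonneg_right hBA (by linarith : 0 ≤ p₁ - q₂),
    mul_nonneg hB (by linarith : 0 ≤ (p₁ - q₁) + (p₂ - q₂))]

lemma inv_add_pow_mul_add_swap_le (s : ℕ) {x y : ℝ} (hx : 0 < x) (hxy : x ≤ y) {a b : ℝ}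
    (ha : 0 ≤ a) (hb : 0 ≤ b) :
    ((a + x) ^ s)⁻¹ * ((b + y) ^ (s + 1))⁻¹ + ((b + x) ^ s)⁻¹ * ((a + y) ^ (s + 1))⁻¹ ≤
      ((a + x) ^ (s + 1))⁻¹ * ((b + y) ^ s)⁻¹ + ((b + x) ^ (s + 1))⁻¹ * ((a + y) ^ s)⁻¹ := by
  wlog hab : a ≤ b generalizing a b
  · linarith [this hb ha (le_of_not_ge hab)]
  have hy : 0 < y := hx.trans_le hxy
  have hcross : (b + x)⁻¹ * (a + y)⁻¹ ≤ (a + x)⁻¹ * (b + y)⁻¹ := by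
    rw [← mul_inv, ← mul_inv]
    exact inv_anti₀ (by positivity) (by nlinarith)
  simpa only [inv_pow] using pow_mul_pow_succ_add_le s (by positivity) hcross
    (by gcongr) (by gcongr) (by gcongr)

lemma hurwitzZetaReal_mul_succ_le {s : ℕ} (hs : 1 < s) {x y : ℝ} (hx : 0 < x) (hxy : x ≤ y) :
    hurwitzZetaReal s x * hurwitzZetaReal (s + 1) y ≤
      hurwitzZetaReal (s + 1) x * hurwitzZetaReal s y := by
  have hy : 0 < y := hx.trans_le hxy
  have hprod : ∀ r r', 1 < r → 1 < r' → Summable fun p : ℕ × ℕ =>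
      (((p.1 : ℝ) + x) ^ r)⁻¹ * (((p.2 : ℝ) + y) ^ r')⁻¹ := fun r r' hr hr' =>
    (summable_inv_add_pow hr hx).mul_of_nonneg (summable_inv_add_pow hr' hy)
      (fun n => by positivity) (fun n => by positivity)
  simp only [hurwitzZetaReal]
  rw [(summable_inv_add_pow hs hx).tsum_mul_tsum (summable_inv_add_pow (by omega) hy)
      (hprod _ _ hs (by omega)),
    (summable_inv_add_pow (by omega) hx).tsum_mul_tsum (summable_inv_add_pow hs hy)
      (hprod _ _ (by omega) hs)]
  exact tsum_le_tsum_of_add_swap_le (hprod _ _ (by omega) hs) (hprod _ _ hs (by omega))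
    fun p => inv_add_pow_mul_add_swap_le s hx hxy p.1.cast_nonneg p.2.cast_nonneg

lemma antitoneOn_hurwitzZetaReal_div {s : ℕ} (hs : 1 < s) {α β : ℝ} (hα : 0 < α) (hαβ : α ≤ β) :
    AntitoneOn (fun t => hurwitzZetaReal s (α + t) / hurwitzZetaReal s (β + t)) (Ici 0) := by
  have hderiv : ∀ t ∈ Ici (0 : ℝ), HasDerivAt
      (fun t => hurwitzZetaReal s (α + t) / hurwitzZetaReal s (β + t))
      ((-s * hurwitzZetaReal (s + 1) (α + t) * hurwitzZetaReal s (β + t) -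
        hurwitzZetaReal s (α + t) * (-s * hurwitzZetaReal (s + 1) (β + t))) /
          hurwitzZetaReal s (β + t) ^ 2) t := by
    intro t (ht : 0 ≤ t)
    have hshift : ∀ γ, 0 < γ → HasDerivAt (fun t => hurwitzZetaReal s (γ + t))
        (-s * hurwitzZetaReal (s + 1) (γ + t)) t := fun γ hγ =>
      (hasDerivAt_hurwitzZetaReal hs (by positivity)).comp_const_add γ t
    exact (hshift α hα).div (hshift β (hα.trans_le hαβ))
      (hurwitzZetaReal_pos hs (by linarith)).ne'
  refine antitoneOn_of_deriv_nonpos (convex_Ici 0)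
    (fun t ht => (hderiv t ht).continuousAt.continuousWithinAt)
    (fun t ht => (hderiv t (interior_subset ht)).differentiableAt.differentiableWithinAt)
    fun t ht => ?_
  have ht : 0 ≤ t := interior_subset (s := Ici (0 : ℝ)) ht
  rw [(hderiv t ht).deriv]
  refine div_nonpos_of_nonpos_of_nonneg ?_ (sq_nonneg _)
  have hcmp := hurwitzZetaReal_mul_succ_le hs (by positivity : 0 < α + t)
    (by linarith : α + t ≤ β + t)
  nlinarith [mul_le_mul_of_nonneg_left hcmp (Nat.cast_nonneg (α := ℝ) s)]

lemma iteratedDeriv_psi_of_odd {m : ℕ} (hm : Odd m) {x : ℝ} (hx : 0 < x) :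
    iteratedDeriv m psi x = m.factorial * hurwitzZetaReal (m + 1) x := by
  rw [iteratedDeriv_psi hm.pos hx, hm.add_one.neg_one_pow, one_mul]

theorem V_bounds_general (m : ℕ) (hodd : Odd m) (α β : ℝ)
    (hα : 0 < α) (hαβ : α ≤ β) (t : ℝ) (ht : t ∈ Set.Icc (0 : ℝ) 1) :
    iteratedDeriv m psi α / iteratedDeriv m psi β ≥
        iteratedDeriv m psi (α + t) / iteratedDeriv m psi (β + t) ∧
      iteratedDeriv m psi (α + t) / iteratedDeriv m psi (β + t) ≥
        iteratedDeriv m psi (α + 1) / iteratedDeriv m psi (β + 1) := by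
  obtain ⟨ht0, ht1⟩ := ht
  have hratio : ∀ u : ℝ, 0 ≤ u → iteratedDeriv m psi (α + u) / iteratedDeriv m psi (β + u) =
      hurwitzZetaReal (m + 1) (α + u) / hurwitzZetaReal (m + 1) (β + u) := fun u hu => by
    rw [iteratedDeriv_psi_of_odd hodd (by positivity),
      iteratedDeriv_psi_of_odd hodd (by linarith), mul_div_mul_left _ _ (by positivity)]
  have hanti := antitoneOn_hurwitzZetaReal_div (s := m + 1) (by linarith [hodd.pos]) hα hαβ
  have hratio0 := hratio 0 le_rfl
  simp only [add_zero] at hratio0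
  rw [hratio0, hratio t ht0, hratio 1 zero_le_one]
  exact ⟨by simpa only [add_zero] using hanti (mem_Ici.2 le_rfl) (mem_Ici.2 ht0) ht0,
    hanti (mem_Ici.2 ht0) (mem_Ici.2 zero_le_one) ht1⟩

theorem V_bounds (m : ℕ) (hm : 0 < m) (hodd : Odd m) (α β : ℝ)
    (hα : 0 < α) (hαβ : α ≤ β) (t : ℝ) (ht : t ∈ Set.Icc (0 : ℝ) 1) :
    iteratedDeriv m psi α / iteratedDeriv m psi β ≥
        iteratedDeriv m psi (α + t) / iteratedDeriv m psi (β + t) ∧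
      iteratedDeriv m psi (α + t) / iteratedDeriv m psi (β + t) ≥
        iteratedDeriv m psi (α + 1) / iteratedDeriv m psi (β + 1) :=
  V_bounds_general m hodd α β hα hαβ t ht
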